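/- Let G be a marked graph, let {a, b} be an edge of G, and suppose {c, d, e} induces a triangle in G − {a, b}. Then at most one of the three edges {c,d}, {c,e}, {d,e} belongs to E[a,b], the set of edges crossable with {a, b}. -/

import Mathlib

open scoped unitInterval

noncomputable section

abbrev Sphere : Type := Metric.sphere (0 : EuclideanSpace ℝ (Fin 3)) 1

def IsDiscHomeomorph (S : Set Sphere) : Prop :=
  Nonempty (S ≃ₜ (Metric.closedBall (0 : EuclideanSpace ℝ (Fin 2)) 1))

def IsArc (S : Set Sphere) : Prop := Nonempty (unitInterval ≃ₜ S)

/-- Two regions share a curve segment when some arc is contained in both boundaries. -/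
def ShareSegment (A B : Set Sphere) : Prop :=
  ∃ S : Set Sphere, IsArc S ∧ S ⊆ frontier A ∩ frontier B

/-- A marked graph: a simple graph in which each edge is either marked or not. -/
structure MarkedGraph (V : Type*) where
  graph : SimpleGraph V
  marked : Set (Sym2 V)

/-- A maximal clique. -/
def IsMaxClique {V : Type*} (H : SimpleGraph V) (s : Set V) : Prop :=
  H.IsClique s ∧ ∀ t : Set V, H.IsClique t → s ⊆ t → s = t

/-- A maximal 4-clique (an MC₄). -/
def IsMC4 {V : Type*} (H : SimpleGraph V) (s : Set V) : Prop :=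
  IsMaxClique H s ∧ s.ncard = 4

/-- Two edges of a marked graph are crossable when both are unmarked edges and their four
endpoints form a maximal 4-clique. -/
def Crossable {V : Type*} (G : MarkedGraph V) (e f : Sym2 V) : Prop :=
  e ∈ G.graph.edgeSet ∧ f ∈ G.graph.edgeSet ∧ e ∉ G.marked ∧ f ∉ G.marked ∧
    IsMC4 G.graph {v : V | v ∈ e ∨ v ∈ f}

/-- `crossSet G e` is the set `𝓔[e]` of all edges crossable with `e`. -/
def crossSet {V : Type*} (G : MarkedGraph V) (e : Sym2 V) : Set (Sym2 V) :=
  {f | Crossable G e f}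

/-- The marked graph induced on a set of vertices. -/
def MarkedGraph.induce {V : Type*} (G : MarkedGraph V) (S : Set V) : MarkedGraph S where
  graph := G.graph.induce S
  marked := {e : Sym2 S | e.map Subtype.val ∈ G.marked}

/-- Mark one extra edge of a marked graph. -/
def MarkedGraph.mark {V : Type*} (G : MarkedGraph V) (e : Sym2 V) : MarkedGraph V where
  graph := G.graph
  marked := insert e G.marked

/-- `G − U − F`: delete the vertices in `U` (with incident edges) and the edges in `F`. -/
def MarkedGraph.remove {V : Type*} (G : MarkedGraph V) (U : Set V) (F : Set (Sym2 V)) :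
    MarkedGraph ↥(Uᶜ) where
  graph := (G.graph.deleteEdges F).induce Uᶜ
  marked := {e : Sym2 ↥(Uᶜ) | e.map Subtype.val ∈ G.marked}

/-- The marked graph induced on `S ∪ C` in which, additionally, all edges of `G[C]` are
marked. -/
def MarkedGraph.inducePlus {V : Type*} (G : MarkedGraph V) (S C : Set V) :
    MarkedGraph ↥(S ∪ C) where
  graph := G.graph.induce (S ∪ C)
  marked := {e : Sym2 ↥(S ∪ C) | e.map Subtype.val ∈ G.marked ∨
    (e.map Subtype.val ∈ G.graph.edgeSet ∧ ∀ w ∈ e, (w : V) ∈ C)}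

/-- An atlas of a marked graph `G`: a hole-free 4-map of `G` in which the nations of every
marked edge share a curve segment of their boundaries. -/
structure Atlas {V : Type*} (G : MarkedGraph V) where
  nation : V → Set Sphere
  isDisc : ∀ v, IsDiscHomeomorph (nation v)
  interiors_disjoint : ∀ ⦃u v : V⦄, u ≠ v →
    interior (nation u) ∩ interior (nation v) = ∅
  adj_iff : ∀ ⦃u v : V⦄, u ≠ v →
    (G.graph.Adj u v ↔ (frontier (nation u) ∩ frontier (nation v)).Nonempty)
  fourMap : ∀ p : Sphere, ({v : V | p ∈ nation v}).Finite ∧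
    ({v : V | p ∈ nation v}).ncard ≤ 4
  marked_share : ∀ ⦃u v : V⦄, G.graph.Adj u v → s(u, v) ∈ G.marked →
    ShareSegment (nation u) (nation v)
  covers : (⋃ v : V, nation v) = Set.univ

/-- An atlas is well-formed when for every edge the intersection of the two nations is a
single point or a single curve segment, but not both. -/
def Atlas.WellFormed {V : Type*} {G : MarkedGraph V} (M : Atlas G) : Prop :=
  ∀ ⦃u v : V⦄, G.graph.Adj u v →
    Xor' (∃ p : Sphere, M.nation u ∩ M.nation v = {p})
      (IsArc (M.nation u ∩ M.nation v))

/-- A `k`-point of an atlas: a point lying on exactly `k` nations. -/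
def Atlas.IsKPoint {V : Type*} {G : MarkedGraph V} (M : Atlas G) (p : Sphere) (k : ℕ) :
    Prop :=
  ({v : V | p ∈ M.nation v}).ncard = k

/-- A `(u,v)`-segment of an atlas: a curve segment shared by the boundaries of the nations of
`u` and `v`, each of whose endpoints is a 3- or 4-point. -/
def Atlas.IsUVSegment {V : Type*} {G : MarkedGraph V} (M : Atlas G) (u v : V)
    (S : Set Sphere) : Prop :=
  ∃ h : unitInterval ≃ₜ S, S ⊆ frontier (M.nation u) ∩ frontier (M.nation v) ∧
    (M.IsKPoint (h 0 : S) 3 ∨ M.IsKPoint (h 0 : S) 4) ∧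
    (M.IsKPoint (h 1 : S) 3 ∨ M.IsKPoint (h 1 : S) 4)

/-- A shrinkable segment with ending nations `a` and `b`: a `(u,v)`-segment `S` for some
unmarked edge `{u,v}`, both of whose endpoints are 3-points, such that the two endpoints of
`S` are touched by the distinct adjacent nations `a` and `b` respectively. -/
def Atlas.IsShrinkableSegment {V : Type*} {G : MarkedGraph V} (M : Atlas G) (a b : V)
    (S : Set Sphere) : Prop :=
  ∃ (u v : V) (h : unitInterval ≃ₜ S),
    M.IsUVSegment u v S ∧ s(u, v) ∉ G.marked ∧ G.graph.Adj u v ∧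
    M.IsKPoint (h 0 : S) 3 ∧ M.IsKPoint (h 1 : S) 3 ∧
    a ≠ b ∧ G.graph.Adj a b ∧
    ((h 0 : S) : Sphere) ∈ M.nation a ∧ ((h 1 : S) : Sphere) ∈ M.nation b

/-- The four (closed) quadrants of the plane. -/
def Quadrant : Fin 4 → Set (ℝ × ℝ)
  | 0 => {q | 0 ≤ q.1 ∧ 0 ≤ q.2}
  | 1 => {q | q.1 ≤ 0 ∧ 0 ≤ q.2}
  | 2 => {q | q.1 ≤ 0 ∧ q.2 ≤ 0}
  | 3 => {q | 0 ≤ q.1 ∧ q.2 ≤ 0}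

/-- Four regions meet at the point `p` cyclically in the order `A, B, C, D`: some
neighborhood of `p` is homeomorphic to the plane, taking `p` to the origin and the four
regions to the four quadrants in cyclic order. -/
def MeetCyclically (A B C D : Set Sphere) (p : Sphere) : Prop :=
  ∃ U ∈ nhds p, ∃ φ : U ≃ₜ (ℝ × ℝ),
    (∀ x : U, ((x : Sphere) = p ↔ φ x = 0)) ∧
    (∀ x : U, ((x : Sphere) ∈ A ↔ φ x ∈ Quadrant 0)) ∧
    (∀ x : U, ((x : Sphere) ∈ B ↔ φ x ∈ Quadrant 1)) ∧
    (∀ x : U, ((x : Sphere) ∈ C ↔ φ x ∈ Quadrant 2)) ∧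
    (∀ x : U, ((x : Sphere) ∈ D ↔ φ x ∈ Quadrant 3))

/-- A correct 4-pizza `⟨a, b, c, d⟩` of a marked graph `G`: `G` has a well-formed atlas in
which the nations of `a`, `b`, `c`, `d` meet at a point cyclically in this order. -/
def CorrectFourPizza {V : Type*} (G : MarkedGraph V) (a b c d : V) : Prop :=
  ∃ M : Atlas G, M.WellFormed ∧
    ∃ p : Sphere, MeetCyclically (M.nation a) (M.nation b) (M.nation c) (M.nation d) p

/-- Removing a correct 4-pizza `⟨a, b, c, d⟩`: delete the edge `{a,c}` and mark the edges
`{b,d}`, `{a,b}`, `{b,c}`, `{c,d}`, `{d,a}`. -/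
def removeFourPizza {V : Type*} (G : MarkedGraph V) (a b c d : V) : MarkedGraph V where
  graph := G.graph.deleteEdges {s(a, c)}
  marked := G.marked ∪ {s(b, d), s(a, b), s(b, c), s(c, d), s(d, a)}

/-- A graph is `k`-connected when removing fewer than `k` vertices always leaves a connected
graph. -/
def IsKConnected {V : Type*} (H : SimpleGraph V) (k : ℕ) : Prop :=
  ∀ S : Set V, S.ncard < k → (H.induce Sᶜ).Connected

/-- The set of vertices of `V` lying in a given connected component of a graph on a subtype
of `V`. -/
def compVerts {V : Type*} {S : Set V} {H : SimpleGraph S}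
    (K : H.ConnectedComponent) : Set V :=
  {w : V | ∃ h : w ∈ S, H.connectedComponentMk ⟨w, h⟩ = K}

/-- A separating edge: an edge `{a,b}` such that `G − {a,b} − 𝓔[{a,b}]` is disconnected. -/
def IsSeparatingEdge {V : Type*} (G : MarkedGraph V) (a b : V) : Prop :=
  G.graph.Adj a b ∧
    ¬ (G.remove {a, b} (crossSet G s(a, b))).graph.Connected

/-- A separating triple: a list `⟨a,b,c⟩` spanning a clique such that
`G − {a,b,c} − 𝓔[{a,b}]` is disconnected. -/
def IsSeparatingTriple {V : Type*} (G : MarkedGraph V) (a b c : V) : Prop :=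
  G.graph.Adj a b ∧ G.graph.Adj a c ∧ G.graph.Adj b c ∧
    ¬ (G.remove {a, b, c} (crossSet G s(a, b))).graph.Connected

/-- An induced 4-cycle on the (distinct) vertices `a, b, c, d`, in this cyclic order. -/
def IsInduced4Cycle {V : Type*} (H : SimpleGraph V) (a b c d : V) : Prop :=
  a ≠ b ∧ a ≠ c ∧ a ≠ d ∧ b ≠ c ∧ b ≠ d ∧ c ≠ d ∧
    H.Adj a b ∧ H.Adj b c ∧ H.Adj c d ∧ H.Adj d a ∧ ¬ H.Adj a c ∧ ¬ H.Adj b d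

/-- A separating 4-cycle: an induced 4-cycle whose removal disconnects `G`. -/
def IsSeparating4Cycle {V : Type*} (G : MarkedGraph V) (a b c d : V) : Prop :=
  IsInduced4Cycle G.graph a b c d ∧
    ¬ (G.graph.induce ({a, b, c, d}ᶜ : Set V)).Connected

/-- A separating quadruple: a list `⟨a,b,c,d⟩` spanning an induced 4-cycle such that
`G − {a,b,c,d} − 𝓔[{a,b}]` is disconnected. -/
def IsSeparatingQuadruple {V : Type*} (G : MarkedGraph V) (a b c d : V) : Prop :=
  IsInduced4Cycle G.graph a b c d ∧
    ¬ (G.remove {a, b, c, d} (crossSet G s(a, b))).graph.Connected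

/-- A separating triangle: a list `⟨a,b,c⟩` spanning a clique such that
`G − {a,b,c} − (𝓔[{a,b}] ∪ 𝓔[{a,c}])` is disconnected. -/
def IsSeparatingTriangle {V : Type*} (G : MarkedGraph V) (a b c : V) : Prop :=
  G.graph.Adj a b ∧ G.graph.Adj a c ∧ G.graph.Adj b c ∧
    ¬ (G.remove {a, b, c} (crossSet G s(a, b) ∪ crossSet G s(a, c))).graph.Connected

/-- A strongly separating triangle: a separating triangle such that
`G − {a,b,c} − (𝓔[{a,b}] ∪ 𝓔[{a,c}])` has a connected component consisting of a single
vertex. -/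
def IsStronglySeparatingTriangle {V : Type*} (G : MarkedGraph V) (a b c : V) : Prop :=
  IsSeparatingTriangle G a b c ∧
    ∃ K : (G.remove {a, b, c} (crossSet G s(a, b) ∪ crossSet G s(a, c))).graph.ConnectedComponent,
      (compVerts K).ncard = 1

/-- `N_G(U)`: the union of the neighborhoods of the vertices of `U`. -/
def nbrSet {V : Type*} (H : SimpleGraph V) (U : Set V) : Set V :=
  ⋃ u ∈ U, H.neighborSet u

section

variable {V : Type*} {G : MarkedGraph V} {e f : Sym2 V}

lemma Crossable.isMaxClique (h : Crossable G e f) :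
    IsMaxClique G.graph {v | v ∈ e ∨ v ∈ f} :=
  h.2.2.2.2.1

lemma Crossable.ncard_eq_four (h : Crossable G e f) :
    {v | v ∈ e ∨ v ∈ f}.ncard = 4 :=
  h.2.2.2.2.2

lemma Crossable.notMem_of_mem {v : V} (h : Crossable G e f) (hv : v ∈ f) :
    v ∉ e := by
  intro hve
  induction e using Sym2.ind with | _ a b => ?_
  obtain ⟨w, rfl⟩ : ∃ w, s(v, w) = f := ⟨_, Sym2.other_spec hv⟩
  have hsub : {u | u ∈ s(a, b) ∨ u ∈ s(v, w)} ⊆ {w, a, b} := by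
    rintro u (hu | hu) <;> grind
  have hcard : ({w, a, b} : Set V).ncard ≤ 3 := by
    grw [Set.ncard_insert_le, Set.ncard_insert_le, Set.ncard_singleton]
  have hle := (Set.ncard_le_ncard hsub (Set.toFinite _)).trans hcard
  rw [h.ncard_eq_four] at hle
  omega

/-- Otherwise `z` would enlarge the maximal clique spanned by `e` and `s(x, y)`. -/
theorem not_adj_of_mem_crossSet {x y z : V} (hy : s(x, y) ∈ crossSet G e)
    (hz : s(x, z) ∈ crossSet G e) : ¬ G.graph.Adj y z := by
  intro hyz
  have hzx : z ≠ x := (G.graph.mem_edgeSet.1 hz.2.1).ne'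
  have hclique : G.graph.IsClique (insert z {u | u ∈ e ∨ u ∈ s(x, y)}) := by
    refine hy.isMaxClique.1.insert fun u hu hzu => ?_
    rcases hu with hue | hu
    · exact hz.isMaxClique.1 (Or.inr (Sym2.mem_mk_right x z)) (Or.inl hue) hzu
    · rcases Sym2.mem_iff.1 hu with rfl | rfl
      · exact hz.isMaxClique.1 (Or.inr (Sym2.mem_mk_right _ z)) (Or.inr (Sym2.mem_mk_left _ z)) hzu
      · exact hyz.symm
  have hzS : z ∈ {u | u ∈ e ∨ u ∈ s(x, y)} := by
    rw [hy.isMaxClique.2 _ hclique (Set.subset_insert z _)]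
    exact Set.mem_insert z _
  rcases hzS with hze | hzxy
  · exact hz.notMem_of_mem (Sym2.mem_mk_right x z) hze
  · rcases Sym2.mem_iff.1 hzxy with rfl | rfl
    · exact hzx rfl
    · exact hyz.ne rfl

end

theorem at_most_one_triangle_edge_crossable_general {V : Type*} (G : MarkedGraph V)
    (a b c d e : V)
    (hcd : G.graph.Adj c d) (hce : G.graph.Adj c e) (hde : G.graph.Adj d e) :
    ¬ (s(c, d) ∈ crossSet G s(a, b) ∧ s(c, e) ∈ crossSet G s(a, b)) ∧
    ¬ (s(c, d) ∈ crossSet G s(a, b) ∧ s(d, e) ∈ crossSet G s(a, b)) ∧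
    ¬ (s(c, e) ∈ crossSet G s(a, b) ∧ s(d, e) ∈ crossSet G s(a, b)) := by
  refine ⟨fun ⟨hd, he⟩ => not_adj_of_mem_crossSet hd he hde, fun ⟨hc, he⟩ => ?_,
    fun ⟨hc, hd⟩ => ?_⟩
  · rw [Sym2.eq_swap (a := c)] at hc
    exact not_adj_of_mem_crossSet hc he hce
  · rw [Sym2.eq_swap (a := c)] at hc
    rw [Sym2.eq_swap (a := d)] at hd
    exact not_adj_of_mem_crossSet hc hd hcd

/-- If `{a,b}` is an edge of a marked graph `G` and `{c,d,e}` induces a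
triangle in `G − {a,b}`, then at most one of the edges `{c,d}`, `{c,e}`, `{d,e}` is
crossable with `{a,b}`. -/
theorem at_most_one_triangle_edge_crossable {V : Type*} (G : MarkedGraph V)
    (a b c d e : V) (hab : G.graph.Adj a b)
    (hc : c ∉ ({a, b} : Set V)) (hd : d ∉ ({a, b} : Set V)) (he : e ∉ ({a, b} : Set V))
    (hcd : G.graph.Adj c d) (hce : G.graph.Adj c e) (hde : G.graph.Adj d e) :
    ¬ (s(c, d) ∈ crossSet G s(a, b) ∧ s(c, e) ∈ crossSet G s(a, b)) ∧
    ¬ (s(c, d) ∈ crossSet G s(a, b) ∧ s(d, e) ∈ crossSet G s(a, b)) ∧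
    ¬ (s(c, e) ∈ crossSet G s(a, b) ∧ s(d, e) ∈ crossSet G s(a, b)) :=
  at_most_one_triangle_edge_crossable_general G a b c d e hcd hce hde
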